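/- For λ > 0, a ∈ ℝ, and s > λ, the degenerate Laplace transform of sin_λ(at) equals a/((s−λ)² + a²). -/
import Mathlib


open MeasureTheory Set

/-- The degenerate sine `sin_λ(at) = ((1+λt)^(ia/λ) − (1+λt)^(−ia/λ))/(2i)`. -/
noncomputable def degSin (l a t : ℝ) : ℂ :=
  (((1 + l * t : ℝ) : ℂ) ^ (Complex.I * a / l) -
    ((1 + l * t : ℝ) : ℂ) ^ (-(Complex.I * a / l))) / (2 * Complex.I)

lemma aux_int (c : ℂ) (hc : c.re < -1) {l : ℝ} (hl : 0 < l) :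
    IntegrableOn (fun t : ℝ => ((1 + l*t : ℝ):ℂ)^c) (Ioi (0:ℝ)) := by
  have h0 : IntegrableOn (fun x : ℝ => ((x:ℝ):ℂ)^c) (Ioi (1:ℝ)) :=
    integrableOn_Ioi_cpow_of_lt hc one_pos
  have h1 : IntegrableOn (fun u : ℝ => ((1 + u : ℝ):ℂ)^c) (Ioi (0:ℝ)) := by
    have hs : Ioi (0:ℝ) = (fun x : ℝ => 1 + x) ⁻¹' Ioi 1 := by ext x; simp
    rw [hs]
    exact ((measurePreserving_add_left volume (1:ℝ)).integrableOn_comp_preimage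
      (MeasurableEquiv.addLeft (1:ℝ)).measurableEmbedding
      (f := fun x : ℝ => ((x:ℝ):ℂ)^c) (s := Ioi (1:ℝ))).2 h0
  rw [← integrable_indicator_iff measurableSet_Ioi] at h1 ⊢
  have h2 := h1.comp_mul_left' (ne_of_gt hl)
  refine h2.congr (Filter.Eventually.of_forall fun t => ?_)
  by_cases ht : t ∈ Ioi (0:ℝ)
  · have : l * t ∈ Ioi (0:ℝ) := mul_pos hl ht
    simp [indicator_of_mem ht, indicator_of_mem this]
  · have : l * t ∉ Ioi (0:ℝ) := by
      simp only [mem_Ioi, not_lt] at ht ⊢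
      exact mul_nonpos_of_nonneg_of_nonpos hl.le ht
    simp [indicator_of_notMem ht, indicator_of_notMem this]

lemma aux_val (c : ℂ) (hc : c.re < -1) {l : ℝ} (hl : 0 < l) :
    ∫ t in Ioi (0:ℝ), ((1 + l*t : ℝ):ℂ)^c = -1/(l*(c+1)) := by
  have h1 : ∫ t in Ioi (0:ℝ), ((1 + l*t : ℝ):ℂ)^c
      = l⁻¹ • ∫ u in Ioi (l*0), ((1 + u : ℝ):ℂ)^c :=
    integral_comp_mul_left_Ioi (fun u => ((1 + u : ℝ):ℂ)^c) 0 hl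
  have h2 : ∫ u in Ioi (0:ℝ), ((1 + u : ℝ):ℂ)^c = ∫ x in Ioi (1:ℝ), ((x:ℝ):ℂ)^c := by
    have := (measurePreserving_add_left volume (1:ℝ)).setIntegral_preimage_emb
      (MeasurableEquiv.addLeft (1:ℝ)).measurableEmbedding
      (fun x : ℝ => ((x:ℝ):ℂ)^c) (Ioi (1:ℝ))
    simpa using this
  rw [h1, mul_zero, h2, integral_Ioi_cpow_of_lt hc one_pos]
  simp [smul_eq_mul, div_eq_mul_inv]
  ring


theorem degLaplace_degSin (l s a : ℝ) (hl : 0 < l) (hs : l < s) :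
    ∫ t in Ioi (0 : ℝ), (((1 + l * t) ^ (-(s / l)) : ℝ) : ℂ) * degSin l a t =
      (a : ℂ) / ((s - l : ℂ) ^ 2 + (a : ℂ) ^ 2) := by
  set c₁ : ℂ := ((-(s/l) : ℝ) : ℂ) + Complex.I * a / l with hc₁def
  set c₂ : ℂ := ((-(s/l) : ℝ) : ℂ) + -(Complex.I * a / l) with hc₂def
  have hre1 : c₁.re = -(s/l) := by simp [hc₁def, Complex.div_re]; field_simp
  have hre2 : c₂.re = -(s/l) := by simp [hc₂def, Complex.div_re]; field_simp
  have hlt : -(s/l) < -1 := by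
    have : 1 < s / l := (one_lt_div hl).2 hs
    linarith
  have h1 : c₁.re < -1 := by rw [hre1]; exact hlt
  have h2 : c₂.re < -1 := by rw [hre2]; exact hlt
  have hcong : ∫ t in Ioi (0 : ℝ), (((1 + l * t) ^ (-(s / l)) : ℝ) : ℂ) * degSin l a t
      = ∫ t in Ioi (0 : ℝ), (((1 + l*t : ℝ):ℂ)^c₁ - ((1 + l*t : ℝ):ℂ)^c₂) / (2 * Complex.I) := by
    refine setIntegral_congr_fun measurableSet_Ioi fun t ht => ?_
    have hr : (0:ℝ) < 1 + l * t := by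
      have := mul_pos hl (mem_Ioi.1 ht); linarith
    have hne : ((1 + l*t : ℝ):ℂ) ≠ 0 := by
      exact_mod_cast Complex.ofReal_ne_zero.2 hr.ne'
    rw [degSin, Complex.ofReal_cpow hr.le, hc₁def, hc₂def,
      Complex.cpow_add _ _ hne, Complex.cpow_add _ _ hne]
    ring
  rw [hcong, integral_div, integral_sub (aux_int c₁ h1 hl) (aux_int c₂ h2 hl),
    aux_val c₁ h1 hl, aux_val c₂ h2 hl]
  have hl0 : (l:ℂ) ≠ 0 := Complex.ofReal_ne_zero.2 hl.ne'
  have hk1 : c₁ + 1 ≠ 0 := by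
    intro h
    have := congrArg Complex.re h
    simp [hre1] at this
    linarith [hlt]
  have hk2 : c₂ + 1 ≠ 0 := by
    intro h
    have := congrArg Complex.re h
    simp [hre2] at this
    linarith [hlt]
  have hden : ((s - l : ℂ) ^ 2 + (a : ℂ) ^ 2) ≠ 0 := by
    have : ((s - l)^2 + a^2 : ℝ) ≠ 0 := by nlinarith [sq_nonneg a]
    intro h
    apply this
    exact_mod_cast (by push_cast at h ⊢; exact h : (((s-l)^2 + a^2 : ℝ) : ℂ) = 0)
  have hz1 : ((s:ℂ) - l - Complex.I*a) ≠ 0 := by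
    intro h
    have := congrArg Complex.re h
    simp at this
    linarith
  have hz2 : ((s:ℂ) - l + Complex.I*a) ≠ 0 := by
    intro h
    have := congrArg Complex.re h
    simp at this
    linarith
  have e1 : (l:ℂ)*(c₁+1) = -((s:ℂ) - l - Complex.I*a) := by
    rw [hc₁def]; push_cast; field_simp; ring
  have e2 : (l:ℂ)*(c₂+1) = -((s:ℂ) - l + Complex.I*a) := by
    rw [hc₂def]; push_cast; field_simp; ring
  rw [e1, e2]
  have hXY : ((s:ℂ)-l-Complex.I*a) * ((s:ℂ)-l+Complex.I*a) = ((s-l:ℂ))^2 + (a:ℂ)^2 := by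
    linear_combination (-(a:ℂ)^2) * Complex.I_sq
  rw [← hXY, neg_div_neg_eq, neg_div_neg_eq, div_sub_div _ _ hz1 hz2, div_div]
  rw [div_eq_div_iff
    (mul_ne_zero (mul_ne_zero hz1 hz2) (by simp [Complex.I_ne_zero])) (mul_ne_zero hz1 hz2)]
  ring
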